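/- arXiv:1409.1462 — 2 statements merged into one kernel-verified Lean document; each statement's English description precedes it below -/
import Mathlib

section
/- The average primal sequence of Algorithm (DFG) converges sublinearly at rate O(1/k²): for all k ≥ 1, dist_K(G û^k + g) ≤ 8 L_d R_d/(k+1)², and |f(û^k) − f*| ≤ (8 L_d/(k+1)²) · [ R_d² + max(R_d, ‖x^0‖)² ]. -/
/-!
The dual function `d x = L(u(x), x)` is majorized by the affine functions `L(u(y), ·)`, and the
strong convexity of `f` gives the descent inequality `L(u(y), x) - L_d / 2 ‖x - y‖² ≤ d x`; so
DFG is FISTA applied to `d` on `K*`. The estimate-sequence argument, combined with Jensen's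
inequality for the convex map `u ↦ L(u, w)`, yields for every `w ∈ K*`
  `θ_k² (L(û^k, w) - f*) ≤ L_d / 2 ‖w - x^0‖²`,
and `θ_k ≥ (k + 1) / 2`. Taking `w = 0` bounds `f(û^k) - f*` from above; moving from `x*` in the
direction `-ρ ∈ K*`, where `ρ` is the residual of projecting `G û^k + g` onto `K`, bounds the
distance to `K`; and `L(û^k, x*) ≥ d(x*) = f*` bounds `f(û^k) - f*` from below.
-/

open scoped RealInnerProductSpace
open Filter Finset Metric ProperCone Topology

section Projection

variable {F : Type*} [NormedAddCommGroup F] [InnerProductSpace ℝ F]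

theorem real_inner_sub_le_zero_of_forall_norm_sub_le {C : Set F} (hC : Convex ℝ C) {z π : F}
    (hπ : π ∈ C) (hmin : ∀ w ∈ C, ‖z - π‖ ≤ ‖z - w‖) {w : F} (hw : w ∈ C) :
    ⟪z - π, w - π⟫ ≤ 0 := by
  have : Nonempty C := ⟨⟨π, hπ⟩⟩
  refine (norm_eq_iInf_iff_real_inner_le_zero hC hπ).1 ?_ w hw
  exact le_antisymm (le_ciInf fun w => hmin w w.2)
    (ciInf_le ⟨0, by rintro _ ⟨w, rfl⟩; positivity⟩ (⟨π, hπ⟩ : C))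

theorem inner_add_norm_sq_sub_norm_sq_le_of_proj {C : Set F} (hC : Convex ℝ C) {L : ℝ}
    (hL : 0 < L) {y v π : F} (hπ : π ∈ C)
    (hmin : ∀ w ∈ C, ‖y + (1 / L) • v - π‖ ≤ ‖y + (1 / L) • v - w‖) {w : F} (hw : w ∈ C) :
    ⟪w - π, v⟫ + L / 2 * (‖w - π‖ ^ 2 - ‖w - y‖ ^ 2) ≤ -(L / 2 * ‖π - y‖ ^ 2) := by
  have hvi := real_inner_sub_le_zero_of_forall_norm_sub_le hC hπ hmin hw
  have hsplit : ‖w - y‖ ^ 2 = ‖w - π‖ ^ 2 + 2 * ⟪w - π, π - y⟫ + ‖π - y‖ ^ 2 := by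
    rw [← norm_add_sq_real, sub_add_sub_cancel]
  have hscale : L * ⟪y + (1 / L) • v - π, w - π⟫ = ⟪w - π, v⟫ - L * ⟪w - π, π - y⟫ := by
    rw [real_inner_comm, show y + (1 / L) • v - π = (1 / L) • v - (π - y) by abel,
      inner_sub_right, real_inner_smul_right]
    field_simp
  nlinarith [mul_nonpos_of_nonneg_of_nonpos hL.le hvi]

variable [ProperSpace F] {K : Set F}

theorem exists_infDist_eq_norm_sub_neg_mem_innerDual (hne : K.Nonempty) (hcl : IsClosed K)
    (hcv : Convex ℝ K) (hcone : ∀ c : ℝ, 0 ≤ c → ∀ v ∈ K, c • v ∈ K) (z : F) :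
    ∃ π ∈ K, infDist z K = ‖z - π‖ ∧ -(z - π) ∈ innerDual K ∧ ⟪z - π, z⟫ = ‖z - π‖ ^ 2 := by
  obtain ⟨π, hπ, hdist⟩ := hcl.exists_infDist_eq_dist hne z
  rw [dist_eq_norm] at hdist
  have hvi : ∀ w ∈ K, ⟪z - π, w - π⟫ ≤ 0 := fun w hw =>
    real_inner_sub_le_zero_of_forall_norm_sub_le hcv hπ
      (fun w hw => hdist ▸ dist_eq_norm z w ▸ infDist_le_dist_of_mem hw) hw
  have hadd : ∀ v ∈ K, π + v ∈ K := fun v hv => by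
    simpa [smul_add, smul_smul] using
      hcone 2 zero_le_two _
        (hcv hπ hv (a := 1 / 2) (b := 1 / 2) (by norm_num) (by norm_num) (by norm_num))
  have horth : ⟪z - π, π⟫ = 0 := by
    have h0 := hvi 0 (by simpa using hcone 0 le_rfl π hπ)
    have h2 := hvi (π + π) (hadd π hπ)
    rw [zero_sub, inner_neg_right] at h0
    rw [add_sub_cancel_right] at h2
    linarith
  refine ⟨π, hπ, hdist, mem_innerDual.2 fun v hv => ?_, ?_⟩
  · have h := hvi (π + v) (hadd v hv)
    rw [add_sub_cancel_left] at h
    rw [inner_neg_right, real_inner_comm]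
    linarith
  · rw [← real_inner_self_eq_norm_sq, inner_sub_right, horth, sub_zero]

theorem neg_norm_mul_infDist_le_inner (hne : K.Nonempty) (hcl : IsClosed K) {z w : F}
    (hw : w ∈ innerDual K) : -(‖w‖ * infDist z K) ≤ ⟪w, z⟫ := by
  obtain ⟨π, hπ, hdist⟩ := hcl.exists_infDist_eq_dist hne z
  have hπw : 0 ≤ ⟪w, π⟫ := real_inner_comm w π ▸ mem_innerDual.1 hw hπ
  have hcs : -(‖w‖ * ‖z - π‖) ≤ ⟪w, z - π⟫ := by
    simpa [neg_le] using real_inner_le_norm (-w) (z - π)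
  rw [hdist, dist_eq_norm]
  linarith [inner_sub_right (𝕜 := ℝ) w z π]

end Projection

theorem le_four_mul_of_forall_mul_le_sq {a c R : ℝ} (hR : 0 ≤ R)
    (h : ∀ t, 0 ≤ t → t * a ≤ c * (R + t) ^ 2) : a ≤ 4 * c * R := by
  rcases hR.eq_or_lt with rfl | hR
  · by_contra! hpos
    rw [mul_zero] at hpos
    have hc : 0 < c := by nlinarith [h 1 zero_le_one]
    have := h (a / (2 * c)) (div_nonneg hpos.le (by positivity))
    field_simp at this
    nlinarith
  · have := h R hR.le
    exact le_of_mul_le_mul_left (by nlinarith) hR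

section ConeGap

variable {F : Type*} [NormedAddCommGroup F] [InnerProductSpace ℝ F] [ProperSpace F]
  {K : Set F} {z x₀ xs : F} {φ c : ℝ}

theorem infDist_le_of_forall_sub_inner_le (hne : K.Nonempty) (hcl : IsClosed K)
    (hcv : Convex ℝ K) (hcone : ∀ c : ℝ, 0 ≤ c → ∀ v ∈ K, c • v ∈ K) (hc : 0 ≤ c)
    (hxs : xs ∈ innerDual K)
    (hup : ∀ w ∈ innerDual K, φ - ⟪w, z⟫ ≤ c * ‖w - x₀‖ ^ 2) (hlo : ⟪xs, z⟫ ≤ φ) :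
    infDist z K ≤ 4 * c * ‖x₀ - xs‖ := by
  obtain ⟨π, -, hdist, hnormal, hres⟩ :=
    exists_infDist_eq_norm_sub_neg_mem_innerDual hne hcl hcv hcone z
  set ρ := z - π
  rw [hdist]
  refine le_four_mul_of_forall_mul_le_sq (norm_nonneg _) fun t ht => ?_
  rcases (norm_nonneg ρ).eq_or_lt with hρ | hρ
  · rw [← hρ, mul_zero]
    positivity
  -- move from `xs` a distance `t` in the direction `-ρ ∈ K*`
  set w := xs + (t / ‖ρ‖) • -ρ
  have hw : w ∈ innerDual K := add_mem hxs ((innerDual K).smul_mem hnormal (by positivity))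
  have hwz : ⟪w, z⟫ = ⟪xs, z⟫ - t * ‖ρ‖ := by
    rw [inner_add_left, real_inner_smul_left, inner_neg_left, hres]
    field_simp
    ring
  have hwx₀ : ‖w - x₀‖ ≤ ‖x₀ - xs‖ + t := by
    calc ‖w - x₀‖ = ‖(xs - x₀) + (t / ‖ρ‖) • -ρ‖ := by simp only [w]; abel_nf
      _ ≤ ‖xs - x₀‖ + ‖(t / ‖ρ‖) • -ρ‖ := norm_add_le _ _
      _ = ‖x₀ - xs‖ + t := by
        rw [norm_sub_rev, norm_smul, norm_neg, Real.norm_of_nonneg (by positivity)]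
        field_simp
  calc t * ‖ρ‖ ≤ φ - ⟪w, z⟫ := by linarith
    _ ≤ c * ‖w - x₀‖ ^ 2 := hup w hw
    _ ≤ c * (‖x₀ - xs‖ + t) ^ 2 := by gcongr

theorem abs_le_of_forall_sub_inner_le (hne : K.Nonempty) (hcl : IsClosed K)
    (hcv : Convex ℝ K) (hcone : ∀ c : ℝ, 0 ≤ c → ∀ v ∈ K, c • v ∈ K) (hc : 0 ≤ c)
    (hxs : xs ∈ innerDual K)
    (hup : ∀ w ∈ innerDual K, φ - ⟪w, z⟫ ≤ c * ‖w - x₀‖ ^ 2) (hlo : ⟪xs, z⟫ ≤ φ) :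
    |φ| ≤ 4 * c * (‖x₀ - xs‖ ^ 2 + max ‖x₀ - xs‖ ‖x₀‖ ^ 2) := by
  set R := ‖x₀ - xs‖
  set M := max R ‖x₀‖
  have hfeas := infDist_le_of_forall_sub_inner_le hne hcl hcv hcone hc hxs hup hlo
  have hxs_norm : ‖xs‖ ≤ R + ‖x₀‖ := by
    simpa [R, add_comm, norm_sub_rev xs x₀] using norm_sub_le_norm_sub_add_norm_sub xs x₀ 0
  have hRM : R ≤ M := le_max_left _ _
  have hx₀M : ‖x₀‖ ≤ M := le_max_right _ _
  have hR : 0 ≤ R := norm_nonneg _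
  rw [abs_le]
  constructor
  · have hdual := neg_norm_mul_infDist_le_inner (z := z) hne hcl hxs
    have hprod : ‖xs‖ * infDist z K ≤ (R + ‖x₀‖) * (4 * c * R) :=
      mul_le_mul hxs_norm hfeas infDist_nonneg (by positivity)
    nlinarith [mul_le_mul hx₀M hRM hR (hR.trans hRM)]
  · have := hup 0 (zero_mem _)
    rw [inner_zero_left, zero_sub, norm_neg] at this
    nlinarith [pow_le_pow_left₀ (norm_nonneg _) hx₀M 2, sq_nonneg R]

end ConeGap

theorem StrongConvexOn.add_sq_le_of_forall_le {E : Type*} [NormedAddCommGroup E]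
    [NormedSpace ℝ E] {s : Set E} {m : ℝ} {φ : E → ℝ} (hφ : StrongConvexOn s m φ) {z u : E}
    (hz : z ∈ s) (hmin : ∀ v ∈ s, φ z ≤ φ v) (hu : u ∈ s) :
    φ z + m / 2 * ‖u - z‖ ^ 2 ≤ φ u := by
  -- compare `φ z` with `φ (t • u + (1 - t) • z)`, divide by `t`, then let `t → 0⁺`
  have hseg : ∀ t ∈ Set.Ioc (0 : ℝ) 1, (1 - t) * (m / 2 * ‖u - z‖ ^ 2) ≤ φ u - φ z :=
    fun t ⟨ht0, ht1⟩ => by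
      have hconv := hφ.2 hu hz ht0.le (sub_nonneg.2 ht1) (add_sub_cancel t 1)
      have hle := hmin _ (hφ.1 hu hz ht0.le (sub_nonneg.2 ht1) (add_sub_cancel t 1))
      simp only [smul_eq_mul] at hconv
      refine le_of_mul_le_mul_left ?_ ht0
      linarith
  have hlim : Tendsto (fun t : ℝ => (1 - t) * (m / 2 * ‖u - z‖ ^ 2)) (𝓝[>] 0)
      (𝓝 (m / 2 * ‖u - z‖ ^ 2)) := by
    have hcont : Continuous fun t : ℝ => (1 - t) * (m / 2 * ‖u - z‖ ^ 2) := by fun_prop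
    have := hcont.tendsto 0
    simpa using this.mono_left nhdsWithin_le_nhds
  linarith [le_of_tendsto hlim (eventually_of_mem (Ioc_mem_nhdsGT one_pos) hseg)]

section Lagrangian

variable {E F : Type*} [NormedAddCommGroup E] [InnerProductSpace ℝ E]
  [NormedAddCommGroup F] [InnerProductSpace ℝ F]

noncomputable def lagrangian (f : E → ℝ) (G : E →L[ℝ] F) (g : F) (u : E) (x : F) : ℝ :=
  f u + ⟪x, -(G u) - g⟫

variable {f : E → ℝ} {G : E →L[ℝ] F} {g : F} {U : Set E} {σ L : ℝ} {uu : F → E}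

theorem lagrangian_eq_sub_inner (u : E) (x : F) :
    lagrangian f G g u x = f u - ⟪x, G u + g⟫ := by
  rw [lagrangian, show -(G u) - g = -(G u + g) by abel, inner_neg_right, sub_eq_add_neg]

theorem lagrangian_sub_lagrangian (u : E) (a b : F) :
    lagrangian f G g u a - lagrangian f G g u b = ⟪a - b, -(G u) - g⟫ := by
  simp only [lagrangian, inner_sub_left]
  ring

theorem StrongConvexOn.lagrangian (hf : StrongConvexOn U σ f) (x : F) :
    StrongConvexOn U σ (lagrangian f G g · x) := by
  refine ⟨hf.1, fun u hu v hv a b ha hb hab => ?_⟩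
  have hG : -(G (a • u + b • v)) - g = a • (-(G u) - g) + b • (-(G v) - g) := by
    rw [map_add, map_smul, map_smul]
    linear_combination (norm := module) hab • g
  have hconv := hf.2 hu hv ha hb hab
  simp only [smul_eq_mul] at hconv
  simp only [_root_.lagrangian, hG, inner_add_right, real_inner_smul_right, smul_eq_mul]
  linarith

theorem lagrangian_le_of_mem_innerDual [CompleteSpace F] {K : Set F} {u : E} {w : F}
    (hu : G u + g ∈ K) (hw : w ∈ innerDual K) : lagrangian f G g u w ≤ f u := by
  rw [lagrangian_eq_sub_inner, sub_le_self_iff, real_inner_comm]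
  exact mem_innerDual.1 hw hu

/-- Descent lemma for the dual function `x ↦ lagrangian f G g (uu x) x`. -/
theorem lagrangian_sub_sq_le_dual (hσ : 0 < σ) (hf : StrongConvexOn U σ f)
    (hL : ‖G‖ ^ 2 / σ ≤ L)
    (huu : ∀ x, uu x ∈ U ∧ ∀ u ∈ U, lagrangian f G g (uu x) x ≤ lagrangian f G g u x) (a b : F) :
    lagrangian f G g (uu b) a - L / 2 * ‖a - b‖ ^ 2 ≤ lagrangian f G g (uu a) a := by
  have hstrong := (hf.lagrangian (G := G) (g := g) b).add_sq_le_of_forall_le (huu b).1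
    (huu b).2 (huu a).1
  set δ := ‖uu a - uu b‖
  have hcross : -(‖G‖ * ‖a - b‖ * δ) ≤ ⟪a - b, G (uu b - uu a)⟫ := by
    have h1 := real_inner_le_norm (-(a - b)) (G (uu b - uu a))
    rw [inner_neg_left, norm_neg] at h1
    have h2 := G.le_opNorm (uu b - uu a)
    rw [norm_sub_rev] at h2
    nlinarith [mul_le_mul_of_nonneg_left h2 (norm_nonneg (a - b))]
  have hamgm : ‖G‖ * ‖a - b‖ * δ ≤ σ / 2 * δ ^ 2 + ‖G‖ ^ 2 / σ / 2 * ‖a - b‖ ^ 2 := by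
    rw [← sub_nonneg]
    have : σ / 2 * δ ^ 2 + ‖G‖ ^ 2 / σ / 2 * ‖a - b‖ ^ 2 - ‖G‖ * ‖a - b‖ * δ
        = (σ * δ - ‖G‖ * ‖a - b‖) ^ 2 / (2 * σ) := by
      field_simp
      ring
    rw [this]
    positivity
  have hlin : ⟪a - b, -(G (uu a)) - g⟫ = ⟪a - b, -(G (uu b)) - g⟫ + ⟪a - b, G (uu b - uu a)⟫ := by
    rw [← inner_add_right, map_sub]
    abel_nf
  have hshift_a := lagrangian_sub_lagrangian (f := f) (G := G) (g := g) (uu a) a b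
  have hshift_b := lagrangian_sub_lagrangian (f := f) (G := G) (g := g) (uu b) a b
  nlinarith [mul_le_mul_of_nonneg_right hL (sq_nonneg ‖a - b‖)]

theorem lagrangian_add_sq_sub_sq_le_dual_of_proj (hσ : 0 < σ) (hf : StrongConvexOn U σ f)
    (hL : ‖G‖ ^ 2 / σ ≤ L) (hL0 : 0 < L)
    (huu : ∀ x, uu x ∈ U ∧ ∀ u ∈ U, lagrangian f G g (uu x) x ≤ lagrangian f G g u x)
    {C : Set F} (hC : Convex ℝ C) {y x' : F} (hx' : x' ∈ C)
    (hmin : ∀ w ∈ C, ‖y + (1 / L) • (-(G (uu y)) - g) - x'‖ ≤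
      ‖y + (1 / L) • (-(G (uu y)) - g) - w‖) {w : F} (hw : w ∈ C) :
    lagrangian f G g (uu y) w + L / 2 * (‖w - x'‖ ^ 2 - ‖w - y‖ ^ 2) ≤
      lagrangian f G g (uu x') x' := by
  have hthree := inner_add_norm_sq_sub_norm_sq_le_of_proj hC hL0 hx' hmin hw
  have hdescent := lagrangian_sub_sq_le_dual hσ hf hL huu x' y
  have hshift := lagrangian_sub_lagrangian (f := f) (G := G) (g := g) (uu y) w x'
  linarith

end Lagrangian

def IsNesterovSeq (θ : ℕ → ℝ) : Prop :=
  θ 0 = 0 ∧ θ 1 = 1 ∧ ∀ k, 1 ≤ k → θ (k + 1) = (1 + Real.sqrt (1 + 4 * θ k ^ 2)) / 2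

namespace IsNesterovSeq

variable {θ : ℕ → ℝ}

theorem one_le (hθ : IsNesterovSeq θ) {k : ℕ} (hk : 1 ≤ k) : 1 ≤ θ k := by
  induction k, hk using Nat.le_induction with
  | base => exact hθ.2.1.ge
  | succ m hm _ =>
    rw [hθ.2.2 m hm]
    have : 1 ≤ Real.sqrt (1 + 4 * θ m ^ 2) := Real.one_le_sqrt.2 (by nlinarith [sq_nonneg (θ m)])
    linarith

theorem nonneg (hθ : IsNesterovSeq θ) (k : ℕ) : 0 ≤ θ k := by
  rcases k with _ | k
  · exact hθ.1.ge
  · exact zero_le_one.trans (hθ.one_le k.succ_pos)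

theorem sq_succ_sub_succ (hθ : IsNesterovSeq θ) (k : ℕ) : θ (k + 1) ^ 2 - θ (k + 1) = θ k ^ 2 := by
  rcases k with _ | k
  · simp [hθ.1, hθ.2.1]
  · rw [hθ.2.2 _ k.succ_pos]
    linear_combination (1 / 4 : ℝ) * Real.sq_sqrt (by positivity : (0 : ℝ) ≤ 1 + 4 * θ (k + 1) ^ 2)

theorem half_succ_le (hθ : IsNesterovSeq θ) {k : ℕ} (hk : 1 ≤ k) : ((k : ℝ) + 1) / 2 ≤ θ k := by
  induction k, hk using Nat.le_induction with
  | base => norm_num [hθ.2.1]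
  | succ m hm ih =>
    rw [hθ.2.2 m hm]
    have : 2 * θ m ≤ Real.sqrt (1 + 4 * θ m ^ 2) :=
      Real.le_sqrt_of_sq_le (by linarith [sq_nonneg (θ m)])
    push_cast
    linarith

theorem sum_range (hθ : IsNesterovSeq θ) (k : ℕ) : ∑ j ∈ range (k + 1), θ j = θ k ^ 2 := by
  induction k with
  | zero => simp [hθ.1]
  | succ k ih => rw [sum_range_succ, ih, ← hθ.sq_succ_sub_succ k, sub_add_cancel]

end IsNesterovSeq

section EstimateSequence

variable {F : Type*} [NormedAddCommGroup F] [InnerProductSpace ℝ F] {C : Set F} {L : ℝ}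
  {θ : ℕ → ℝ} {x y : ℕ → F} {a D : ℕ → ℝ} {r : ℕ → F}

/-- Since `0 - 1 = 0` in `ℕ`, this is `x 0` at `k = 0` whenever `θ 0 = 0`. -/
def extrapolate (θ : ℕ → ℝ) (x : ℕ → F) (k : ℕ) : F := θ k • x k - (θ k - 1) • x (k - 1)

theorem IsNesterovSeq.estimate_succ (hθ : IsNesterovSeq θ) (hC : Convex ℝ C) {m : ℕ}
    (hy : y (m + 1) = x m + ((θ m - 1) / θ (m + 1)) • (x m - x (m - 1))) (hxC : x m ∈ C)
    (hstep : ∀ w ∈ C, a (m + 1) + ⟪w, r (m + 1)⟫ +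
      L / 2 * (‖w - x (m + 1)‖ ^ 2 - ‖w - y (m + 1)‖ ^ 2) ≤ D (m + 1))
    (hD : D m ≤ a (m + 1) + ⟪x m, r (m + 1)⟫) {w : F} (hw : w ∈ C) :
    θ (m + 1) * (a (m + 1) + ⟪w, r (m + 1)⟫) +
        L / 2 * (‖w - extrapolate θ x (m + 1)‖ ^ 2 - ‖w - extrapolate θ x m‖ ^ 2) ≤
      θ (m + 1) ^ 2 * D (m + 1) - θ m ^ 2 * D m := by
  set τ := θ (m + 1)
  have hτ : 0 < τ := zero_lt_one.trans_le (hθ.one_le m.succ_pos)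
  have hτinv : τ⁻¹ ≤ 1 := inv_le_one_of_one_le₀ (hθ.one_le m.succ_pos)
  -- multiplied by `τ ^ 2`, the step inequality at `W` becomes the claim
  set W := (1 - τ⁻¹) • x m + τ⁻¹ • w
  have hW : W ∈ C := hC hxC hw (sub_nonneg.2 hτinv) (by positivity) (sub_add_cancel 1 τ⁻¹)
  have hWx : τ • (W - x (m + 1)) = w - extrapolate θ x (m + 1) := by
    simp only [W, extrapolate, Nat.add_sub_cancel]
    match_scalars <;> field_simp <;> ring
  have hWy : τ • (W - y (m + 1)) = w - extrapolate θ x m := by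
    simp only [W, extrapolate, hy]
    match_scalars <;> field_simp
    ring
  have hnorm : ∀ v : F, ‖τ • v‖ ^ 2 = τ ^ 2 * ‖v‖ ^ 2 := fun v => by
    rw [norm_smul, Real.norm_of_nonneg hτ.le, mul_pow]
  have hlin : τ ^ 2 * (a (m + 1) + ⟪W, r (m + 1)⟫) =
      θ m ^ 2 * (a (m + 1) + ⟪x m, r (m + 1)⟫) + τ * (a (m + 1) + ⟪w, r (m + 1)⟫) := by
    simp only [W, inner_add_left, real_inner_smul_left, ← hθ.sq_succ_sub_succ m]
    field_simp
    ring
  have hscaled := mul_le_mul_of_nonneg_left (hstep W hW) (sq_nonneg τ)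
  rw [← hWx, ← hWy, hnorm, hnorm]
  nlinarith [mul_le_mul_of_nonneg_left hD (sq_nonneg (θ m))]

theorem IsNesterovSeq.estimate (hθ : IsNesterovSeq θ) (hC : Convex ℝ C)
    (hy : ∀ k, y (k + 1) = x k + ((θ k - 1) / θ (k + 1)) • (x k - x (k - 1)))
    (hxC : ∀ k, x k ∈ C)
    (hstep : ∀ k, ∀ w ∈ C, a (k + 1) + ⟪w, r (k + 1)⟫ +
      L / 2 * (‖w - x (k + 1)‖ ^ 2 - ‖w - y (k + 1)‖ ^ 2) ≤ D (k + 1))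
    (hD : ∀ k, D k ≤ a (k + 1) + ⟪x k, r (k + 1)⟫) (k : ℕ) {w : F} (hw : w ∈ C) :
    ∑ j ∈ range (k + 1), θ j * (a j + ⟪w, r j⟫) +
        L / 2 * (‖w - extrapolate θ x k‖ ^ 2 - ‖w - x 0‖ ^ 2) ≤ θ k ^ 2 * D k := by
  induction k with
  | zero => simp [extrapolate, hθ.1]
  | succ k ih =>
    have := hθ.estimate_succ hC (hy k) (hxC k) (hstep k) (hD k) hw
    rw [sum_range_succ]
    linarith

end EstimateSequence

section DualFastGradient

variable {E F : Type*} [NormedAddCommGroup E] [InnerProductSpace ℝ E]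
  [NormedAddCommGroup F] [InnerProductSpace ℝ F]
  {f : E → ℝ} {G : E →L[ℝ] F} {g : F} {U : Set E} {σ L fstar : ℝ} {uu : F → E}
  {C : Set F} {θ : ℕ → ℝ} {x y : ℕ → F}

theorem IsNesterovSeq.lagrangian_centerMass_sub_le (hθ : IsNesterovSeq θ) (hσ : 0 < σ)
    (hf : StrongConvexOn U σ f) (hL : ‖G‖ ^ 2 / σ ≤ L) (hL0 : 0 < L)
    (huu : ∀ x, uu x ∈ U ∧ ∀ u ∈ U, lagrangian f G g (uu x) x ≤ lagrangian f G g u x)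
    (hC : Convex ℝ C) (hdual : ∀ w ∈ C, lagrangian f G g (uu w) w ≤ fstar) (hx0 : x 0 ∈ C)
    (hproj : ∀ k, 1 ≤ k → x k ∈ C ∧ ∀ w ∈ C, ‖y k + (1 / L) • (-(G (uu (y k))) - g) - x k‖ ≤
      ‖y k + (1 / L) • (-(G (uu (y k))) - g) - w‖)
    (hy : ∀ k, y (k + 1) = x k + ((θ k - 1) / θ (k + 1)) • (x k - x (k - 1)))
    {k : ℕ} (hk : 1 ≤ k) {w : F} (hw : w ∈ C) :
    lagrangian f G g ((range (k + 1)).centerMass θ (uu ∘ y)) w - fstar ≤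
      2 * L / ((k : ℝ) + 1) ^ 2 * ‖w - x 0‖ ^ 2 := by
  have hxC : ∀ k, x k ∈ C := by
    rintro (_ | k)
    exacts [hx0, (hproj _ k.succ_pos).1]
  have hest := hθ.estimate (a := fun j => f (uu (y j))) (r := fun j => -(G (uu (y j))) - g)
    (D := fun j => lagrangian f G g (uu (x j)) (x j)) (L := L) hC hy hxC
    (fun j _ hw => lagrangian_add_sq_sub_sq_le_dual_of_proj hσ hf hL hL0 huu hC
      (hproj _ j.succ_pos).1 (hproj _ j.succ_pos).2 hw)
    (fun j => (huu _).2 _ (huu _).1) k hw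
  have hsum := hθ.sum_range k
  have hpos : 0 < θ k ^ 2 := by nlinarith [hθ.one_le hk]
  have hjensen := ((hf.lagrangian (G := G) (g := g) w).convexOn fun _ => by positivity
    ).map_centerMass_le (t := range (k + 1)) (p := uu ∘ y) (fun j _ => hθ.nonneg j)
      (hsum ▸ hpos) (fun j _ => (huu (y j)).1)
  simp only [centerMass, hsum, smul_eq_mul, Function.comp_apply] at hjensen ⊢
  rw [le_inv_mul_iff₀ hpos] at hjensen
  have hdk := mul_le_mul_of_nonneg_left (hdual _ (hxC k)) hpos.le
  have hfar : 0 ≤ L / 2 * ‖w - extrapolate θ x k‖ ^ 2 := by positivity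
  calc _ ≤ L / 2 * ‖w - x 0‖ ^ 2 / θ k ^ 2 := by
        rw [le_div_iff₀ hpos]
        simp only [lagrangian] at hjensen hest hdk ⊢
        linarith
    _ ≤ L / 2 * ‖w - x 0‖ ^ 2 / (((k : ℝ) + 1) / 2) ^ 2 := by
        gcongr
        exact hθ.half_succ_le hk
    _ = _ := by field_simp

end DualFastGradient

theorem stmt_11_general {n p : ℕ}
    (f : EuclideanSpace ℝ (Fin n) → ℝ) (σf : ℝ) (hσf : 0 < σf)
    (hfsc : StrongConvexOn Set.univ σf f)
    (U : Set (EuclideanSpace ℝ (Fin n))) (hUcv : Convex ℝ U)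
    (G : EuclideanSpace ℝ (Fin n) →L[ℝ] EuclideanSpace ℝ (Fin p)) (hG : G ≠ 0) (g : EuclideanSpace ℝ (Fin p))
    (K : Set (EuclideanSpace ℝ (Fin p))) (hKne : K.Nonempty) (hKcl : IsClosed K) (hKcv : Convex ℝ K)
    (hKcone : ∀ c : ℝ, 0 ≤ c → ∀ v ∈ K, c • v ∈ K)
    (Kstar : Set (EuclideanSpace ℝ (Fin p)))
    (hKstar : Kstar = {x : EuclideanSpace ℝ (Fin p) | ∀ v ∈ K, 0 ≤ ⟪x, v⟫})
    (Lag : EuclideanSpace ℝ (Fin n) → EuclideanSpace ℝ (Fin p) → ℝ)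
    (hLag : ∀ u x, Lag u x = f u + ⟪x, -(G u) - g⟫)
    (uu : EuclideanSpace ℝ (Fin p) → EuclideanSpace ℝ (Fin n))
    (huu : ∀ x : EuclideanSpace ℝ (Fin p), uu x ∈ U ∧ ∀ u ∈ U, Lag (uu x) x ≤ Lag u x)
    (d : EuclideanSpace ℝ (Fin p) → ℝ) (hd : ∀ x, d x = Lag (uu x) x)
    (ustar : EuclideanSpace ℝ (Fin n))
    (hustar : ustar ∈ U ∧ G ustar + g ∈ K ∧ ∀ u ∈ U, G u + g ∈ K → f ustar ≤ f u)
    (fstar : ℝ) (hfstar : fstar = f ustar)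
    (Xstar : Set (EuclideanSpace ℝ (Fin p))) (hXstar : Xstar = {x ∈ Kstar | d x = fstar})
    (Ld : ℝ) (hLd : Ld = ‖G‖ ^ 2 / σf)
    (projKs : EuclideanSpace ℝ (Fin p) → EuclideanSpace ℝ (Fin p))
    (hprojKs : ∀ z : EuclideanSpace ℝ (Fin p), projKs z ∈ Kstar ∧ ∀ w ∈ Kstar, ‖z - projKs z‖ ≤ ‖z - w‖)
    (θ : ℕ → ℝ) (hθ0 : θ 0 = 0) (hθ1 : θ 1 = 1)
    (hθrec : ∀ k, 1 ≤ k → θ (k + 1) = (1 + Real.sqrt (1 + 4 * θ k ^ 2)) / 2)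
    (x y : ℕ → EuclideanSpace ℝ (Fin p)) (hx0K : x 0 ∈ Kstar) (hy1 : y 1 = x 0)
    (hxrec : ∀ k, 1 ≤ k → x k = projKs (y k + (1 / Ld) • (-(G (uu (y k))) - g)))
    (hyrec : ∀ k, 1 ≤ k →
      y (k + 1) = x k + ((θ k - 1) / θ (k + 1)) • (x k - x (k - 1)))
    (xstar : EuclideanSpace ℝ (Fin p)) (hxstar : xstar ∈ Xstar)
    (Rd : ℝ) (hRd : Rd = ‖x 0 - xstar‖)
    (Sθ : ℕ → ℝ) (hSθ : ∀ k, Sθ k = ∑ j ∈ Finset.range (k + 1), θ j)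
    (uhat : ℕ → EuclideanSpace ℝ (Fin n))
    (huhat : ∀ k, uhat k = (Sθ k)⁻¹ • ∑ j ∈ Finset.range (k + 1), θ j • uu (y j))
 :
    ∀ k : ℕ, 1 ≤ k →
      Metric.infDist (G (uhat k) + g) K ≤ 8 * Ld * Rd / ((k : ℝ) + 1) ^ 2 ∧
      |f (uhat k) - fstar| ≤
        8 * Ld / ((k : ℝ) + 1) ^ 2 * (Rd ^ 2 + max Rd ‖x 0‖ ^ 2) := by
  intro k hk
  obtain rfl : Lag = lagrangian f G g := funext fun u => funext (hLag u)
  obtain rfl : Kstar = innerDual K := by ext; simp [hKstar, real_inner_comm]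
  subst hXstar
  obtain ⟨hxstarK, hdxstar⟩ := hxstar
  have hθ : IsNesterovSeq θ := ⟨hθ0, hθ1, hθrec⟩
  have hLd0 : 0 < Ld := hLd ▸ div_pos (pow_pos (norm_pos_iff.2 hG) 2) hσf
  have hfU : StrongConvexOn U σf f := ⟨hUcv, fun _ _ _ _ => hfsc.2 trivial trivial⟩
  -- at `k = 0` the momentum step vanishes, as `x (0 - 1) = x 0`
  have hy : ∀ k, y (k + 1) = x k + ((θ k - 1) / θ (k + 1)) • (x k - x (k - 1)) := by
    rintro (_ | k)
    exacts [by simp [hy1], hyrec _ k.succ_pos]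
  have huhat' : uhat k = (range (k + 1)).centerMass θ (uu ∘ y) := by rw [huhat, hSθ]; rfl
  have hup : ∀ w ∈ innerDual K,
      (f (uhat k) - fstar) - ⟪w, G (uhat k) + g⟫ ≤ 2 * Ld / ((k : ℝ) + 1) ^ 2 * ‖w - x 0‖ ^ 2 := by
    intro w hw
    have := hθ.lagrangian_centerMass_sub_le hσf hfU hLd.ge hLd0 huu (innerDual K).convex
      (fun w hw => hfstar ▸
        ((huu w).2 _ hustar.1).trans (lagrangian_le_of_mem_innerDual hustar.2.1 hw))
      hx0K (fun k hk => hxrec k hk ▸ hprojKs _) hy hk hw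
    rwa [← huhat', lagrangian_eq_sub_inner, sub_right_comm] at this
  have hlo : ⟪xstar, G (uhat k) + g⟫ ≤ f (uhat k) - fstar := by
    have hU : uhat k ∈ U := huhat' ▸ hUcv.centerMass_mem (fun j _ => hθ.nonneg j)
      (by rw [hθ.sum_range k]; nlinarith [hθ.one_le hk]) (fun j _ => (huu (y j)).1)
    have := (huu xstar).2 _ hU
    rw [← hd, hdxstar, lagrangian_eq_sub_inner] at this
    linarith
  have hc : 0 ≤ 2 * Ld / ((k : ℝ) + 1) ^ 2 := by positivity
  rw [hRd]
  exact ⟨(infDist_le_of_forall_sub_inner_le hKne hKcl hKcv hKcone hc hxstarK hup hlo).trans_eq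
      (by ring),
    (abs_le_of_forall_sub_inner_le hKne hKcl hKcv hKcone hc hxstarK hup hlo).trans_eq (by ring)⟩

theorem stmt_11 {n p : ℕ}
    (f : EuclideanSpace ℝ (Fin n) → ℝ) (σf : ℝ) (hσf : 0 < σf)
    (hfc : Continuous f) (hfsc : StrongConvexOn Set.univ σf f)
    (U : Set (EuclideanSpace ℝ (Fin n))) (hUne : U.Nonempty) (hUcl : IsClosed U) (hUcv : Convex ℝ U)
    (G : EuclideanSpace ℝ (Fin n) →L[ℝ] EuclideanSpace ℝ (Fin p)) (hG : G ≠ 0) (g : EuclideanSpace ℝ (Fin p))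
    (K : Set (EuclideanSpace ℝ (Fin p))) (hKne : K.Nonempty) (hKcl : IsClosed K) (hKcv : Convex ℝ K)
    (hKcone : ∀ c : ℝ, 0 ≤ c → ∀ v ∈ K, c • v ∈ K)
    (Kstar : Set (EuclideanSpace ℝ (Fin p)))
    (hKstar : Kstar = {x : EuclideanSpace ℝ (Fin p) | ∀ v ∈ K, 0 ≤ ⟪x, v⟫})
    (Lag : EuclideanSpace ℝ (Fin n) → EuclideanSpace ℝ (Fin p) → ℝ)
    (hLag : ∀ u x, Lag u x = f u + ⟪x, -(G u) - g⟫)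
    (uu : EuclideanSpace ℝ (Fin p) → EuclideanSpace ℝ (Fin n))
    (huu : ∀ x : EuclideanSpace ℝ (Fin p), uu x ∈ U ∧ ∀ u ∈ U, Lag (uu x) x ≤ Lag u x)
    (d : EuclideanSpace ℝ (Fin p) → ℝ) (hd : ∀ x, d x = Lag (uu x) x)
    (ustar : EuclideanSpace ℝ (Fin n))
    (hustar : ustar ∈ U ∧ G ustar + g ∈ K ∧ ∀ u ∈ U, G u + g ∈ K → f ustar ≤ f u)
    (fstar : ℝ) (hfstar : fstar = f ustar)
    (Xstar : Set (EuclideanSpace ℝ (Fin p))) (hXstar : Xstar = {x ∈ Kstar | d x = fstar})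
    (hXne : Xstar.Nonempty)
    (Ld : ℝ) (hLd : Ld = ‖G‖ ^ 2 / σf)
    (projKs : EuclideanSpace ℝ (Fin p) → EuclideanSpace ℝ (Fin p))
    (hprojKs : ∀ z : EuclideanSpace ℝ (Fin p), projKs z ∈ Kstar ∧ ∀ w ∈ Kstar, ‖z - projKs z‖ ≤ ‖z - w‖)
    (θ : ℕ → ℝ) (hθ0 : θ 0 = 0) (hθ1 : θ 1 = 1)
    (hθrec : ∀ k, 1 ≤ k → θ (k + 1) = (1 + Real.sqrt (1 + 4 * θ k ^ 2)) / 2)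
    (x y : ℕ → EuclideanSpace ℝ (Fin p)) (hx0K : x 0 ∈ Kstar) (hy1 : y 1 = x 0)
    (hxrec : ∀ k, 1 ≤ k → x k = projKs (y k + (1 / Ld) • (-(G (uu (y k))) - g)))
    (hyrec : ∀ k, 1 ≤ k →
      y (k + 1) = x k + ((θ k - 1) / θ (k + 1)) • (x k - x (k - 1)))
    (xstar : EuclideanSpace ℝ (Fin p)) (hxstar : xstar ∈ Xstar)
    (hxstarmin : ∀ z ∈ Xstar, ‖x 0 - xstar‖ ≤ ‖x 0 - z‖)
    (Rd : ℝ) (hRd : Rd = ‖x 0 - xstar‖)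
    (Sθ : ℕ → ℝ) (hSθ : ∀ k, Sθ k = ∑ j ∈ Finset.range (k + 1), θ j)
    (uhat : ℕ → EuclideanSpace ℝ (Fin n))
    (huhat : ∀ k, uhat k = (Sθ k)⁻¹ • ∑ j ∈ Finset.range (k + 1), θ j • uu (y j))
 :
    ∀ k : ℕ, 1 ≤ k →
      Metric.infDist (G (uhat k) + g) K ≤ 8 * Ld * Rd / ((k : ℝ) + 1) ^ 2 ∧
      |f (uhat k) - fstar| ≤
        8 * Ld / ((k : ℝ) + 1) ^ 2 * (Rd ^ 2 + max Rd ‖x 0‖ ^ 2) :=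
  stmt_11_general f σf hσf hfsc U hUcv G hG g K hKne hKcl hKcv hKcone Kstar hKstar Lag hLag uu huu d
    hd ustar hustar fstar hfstar Xstar hXstar Ld hLd projKs hprojKs θ hθ0 hθ1 hθrec x y hx0K hy1
    hxrec hyrec xstar hxstar Rd hRd Sθ hSθ uhat huhat
end

section
/- For the regularized dual problem with parameter δ > 0, the regularized optimal multiplier stays close to x^0: if x*_δ is the (unique) maximizer of d_δ(x) = d(x) − (δ/2)‖x − x^0‖² over K*, then ‖x* − x*_δ‖ ≤ ‖x* − x^0‖ and consequently ‖x^0 − x*_δ‖ ≤ 2 R_d, where x* = [x^0]_{X*} and R_d = ‖x^0 − x*‖. -/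
/-!
The dual function `d` is concave, being the lower envelope of the Lagrangians `x ↦ L(u, x)`, which
are affine in `x`; hence `d_δ` is `δ`-strongly concave, and at its maximizer `x_δ` over the convex
cone `K*` it grows quadratically: `d_δ(x*) + δ/2 ‖x* - x_δ‖² ≤ d_δ(x_δ)`. By weak duality
`d(x_δ) ≤ f* = d(x*)`, so this becomes `‖x* - x_δ‖² + ‖x_δ - x⁰‖² ≤ ‖x* - x⁰‖²`, which gives the
first bound, and the second follows from the triangle inequality.
-/

open scoped RealInnerProductSpace
open Filter Set Topology

lemma StrongConcaveOn.add_sq_norm_sub_le_of_isMaxOn {E : Type*} [NormedAddCommGroup E]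
    [NormedSpace ℝ E] {s : Set E} {m : ℝ} {f : E → ℝ} {x y : E} (hf : StrongConcaveOn s m f)
    (hx : x ∈ s) (hmax : IsMaxOn f s x) (hy : y ∈ s) :
    f y + m / 2 * ‖y - x‖ ^ 2 ≤ f x := by
  -- strong concavity on the segment `[x, y]`, divided by `t`; then let `t → 0⁺`
  have hsegment : ∀ t ∈ Ioo (0 : ℝ) 1, f y + (1 - t) * (m / 2 * ‖y - x‖ ^ 2) ≤ f x := by
    rintro t ⟨ht₀, ht₁⟩
    have hmem := hf.1 hy hx ht₀.le (sub_nonneg.2 ht₁.le) (add_sub_cancel t 1)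
    have hconc := hf.2 hy hx ht₀.le (sub_nonneg.2 ht₁.le) (add_sub_cancel t 1)
    have hle := isMaxOn_iff.1 hmax _ hmem
    simp only [smul_eq_mul] at hconc
    nlinarith
  have hlim : Tendsto (fun t : ℝ ↦ f y + (1 - t) * (m / 2 * ‖y - x‖ ^ 2)) (𝓝[>] 0)
      (𝓝 (f y + m / 2 * ‖y - x‖ ^ 2)) := by
    have : Continuous (fun t : ℝ ↦ f y + (1 - t) * (m / 2 * ‖y - x‖ ^ 2)) := by fun_prop
    simpa using this.tendsto 0 |>.mono_left nhdsWithin_le_nhds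
  exact le_of_tendsto hlim (mem_of_superset (Ioo_mem_nhdsGT zero_lt_one) hsegment)

lemma ConcaveOn.strongConcaveOn_sub_sq_norm_sub {E : Type*} [NormedAddCommGroup E]
    [InnerProductSpace ℝ E] {s : Set E} {d : E → ℝ} (hd : ConcaveOn ℝ s d) (m : ℝ) (x₀ : E) :
    StrongConcaveOn s m fun z ↦ d z - m / 2 * ‖z - x₀‖ ^ 2 := by
  rw [strongConcaveOn_iff_convex]
  have hlin : ConcaveOn ℝ s fun z ↦ m * ⟪x₀, z⟫ - m / 2 * ‖x₀‖ ^ 2 :=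
    ((m • innerₗ E x₀).concaveOn hd.1).add_const _
  have hsplit : (fun z ↦ d z - m / 2 * ‖z - x₀‖ ^ 2 + m / 2 * ‖z‖ ^ 2) =
      d + fun z ↦ m * ⟪x₀, z⟫ - m / 2 * ‖x₀‖ ^ 2 := by
    funext z
    simp only [Pi.add_apply, norm_sub_sq_real, real_inner_comm x₀ z]
    ring
  exact hsplit ▸ hd.add hlin

lemma concaveOn_of_isMinOn_family {ι E : Type*} [AddCommGroup E] [Module ℝ E] {s : Set E}
    {L : ι → E → ℝ} (hL : ∀ i, ConcaveOn ℝ s (L i)) (hs : Convex ℝ s) {U : Set ι} {φ : E → ι}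
    (hφ : ∀ x, φ x ∈ U ∧ ∀ i ∈ U, L (φ x) x ≤ L i x) :
    ConcaveOn ℝ s fun x ↦ L (φ x) x := by
  refine ⟨hs, fun x hx y hy a b ha hb hab ↦ ?_⟩
  set z := a • x + b • y
  calc a • L (φ x) x + b • L (φ y) y ≤ a • L (φ z) x + b • L (φ z) y := by
        gcongr
        · exact (hφ x).2 _ (hφ z).1
        · exact (hφ y).2 _ (hφ z).1
    _ ≤ L (φ z) z := (hL (φ z)).2 hx hy ha hb hab

section Lagrangian

variable {X F : Type*} [NormedAddCommGroup F] [InnerProductSpace ℝ F] {f : X → ℝ} {G : X → F}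
  {g : F} {Lag : X → F → ℝ}

lemma concaveOn_lagrangian (hLag : ∀ u x, Lag u x = f u + ⟪x, -(G u) - g⟫) (u : X) :
    ConcaveOn ℝ univ (Lag u) := by
  have hLag_u : Lag u = ⇑(innerₗ F (-(G u) - g)) + fun _ ↦ f u := by
    funext x
    rw [Pi.add_apply, innerₗ_apply_apply, hLag, real_inner_comm, add_comm]
  exact hLag_u ▸ ((innerₗ F (-(G u) - g)).concaveOn convex_univ).add_const (f u)

lemma lagrangian_le_of_mem_dual {K : Set F} {x : F}
    (hLag : ∀ u x, Lag u x = f u + ⟪x, -(G u) - g⟫) (hx : ∀ v ∈ K, 0 ≤ ⟪x, v⟫) {u : X}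
    (hu : G u + g ∈ K) : Lag u x ≤ f u := by
  have := hx _ hu
  rw [hLag, ← neg_add', inner_neg_right]
  linarith

end Lagrangian

lemma convex_setOf_forall_inner_nonneg {F : Type*} [NormedAddCommGroup F] [InnerProductSpace ℝ F]
    (K : Set F) :
    Convex ℝ {x : F | ∀ v ∈ K, 0 ≤ ⟪x, v⟫} := by
  intro x hx y hy a b ha hb _ v hv
  simp only [inner_add_left, real_inner_smul_left]
  have := hx v hv
  have := hy v hv
  positivity

lemma sq_norm_sub_add_sq_norm_sub_le_of_isMaxOn {E : Type*} [NormedAddCommGroup E]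
    [InnerProductSpace ℝ E] {s : Set E} {d : E → ℝ} (hd : ConcaveOn ℝ s d) {δ : ℝ} (hδ : 0 < δ)
    {x₀ xδ y : E} (hxδ : xδ ∈ s) (hmax : IsMaxOn (fun z ↦ d z - δ / 2 * ‖z - x₀‖ ^ 2) s xδ)
    (hy : y ∈ s) (hle : d xδ ≤ d y) :
    ‖y - xδ‖ ^ 2 + ‖xδ - x₀‖ ^ 2 ≤ ‖y - x₀‖ ^ 2 := by
  have hgrowth :=
    (hd.strongConcaveOn_sub_sq_norm_sub δ x₀).add_sq_norm_sub_le_of_isMaxOn hxδ hmax hy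
  nlinarith

theorem stmt_12_general {n p : ℕ}
    (f : EuclideanSpace ℝ (Fin n) → ℝ)
    (U : Set (EuclideanSpace ℝ (Fin n)))
    (G : EuclideanSpace ℝ (Fin n) →L[ℝ] EuclideanSpace ℝ (Fin p)) (g : EuclideanSpace ℝ (Fin p))
    (K : Set (EuclideanSpace ℝ (Fin p)))
    (Kstar : Set (EuclideanSpace ℝ (Fin p)))
    (hKstar : Kstar = {x : EuclideanSpace ℝ (Fin p) | ∀ v ∈ K, 0 ≤ ⟪x, v⟫})
    (Lag : EuclideanSpace ℝ (Fin n) → EuclideanSpace ℝ (Fin p) → ℝ)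
    (hLag : ∀ u x, Lag u x = f u + ⟪x, -(G u) - g⟫)
    (uu : EuclideanSpace ℝ (Fin p) → EuclideanSpace ℝ (Fin n))
    (huu : ∀ x : EuclideanSpace ℝ (Fin p), uu x ∈ U ∧ ∀ u ∈ U, Lag (uu x) x ≤ Lag u x)
    (d : EuclideanSpace ℝ (Fin p) → ℝ) (hd : ∀ x, d x = Lag (uu x) x)
    (ustar : EuclideanSpace ℝ (Fin n))
    (hustar : ustar ∈ U ∧ G ustar + g ∈ K ∧ ∀ u ∈ U, G u + g ∈ K → f ustar ≤ f u)
    (fstar : ℝ) (hfstar : fstar = f ustar)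
    (Xstar : Set (EuclideanSpace ℝ (Fin p))) (hXstar : Xstar = {x ∈ Kstar | d x = fstar})
    (x0 : EuclideanSpace ℝ (Fin p))
    (xstar : EuclideanSpace ℝ (Fin p)) (hxstar : xstar ∈ Xstar)
    (Rd : ℝ) (hRd : Rd = ‖x0 - xstar‖)
    (δ : ℝ) (hδ : 0 < δ)
    (ddelta : EuclideanSpace ℝ (Fin p) → ℝ)
    (hddelta : ∀ z, ddelta z = d z - δ / 2 * ‖z - x0‖ ^ 2)
    (xdelta : EuclideanSpace ℝ (Fin p)) (hxdK : xdelta ∈ Kstar)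
    (hxdmax : ∀ z ∈ Kstar, ddelta z ≤ ddelta xdelta) :
    ‖xstar - xdelta‖ ≤ ‖xstar - x0‖ ∧ ‖x0 - xdelta‖ ≤ 2 * Rd := by
  subst hKstar hXstar
  obtain ⟨hxstarK, hdxstar⟩ := hxstar
  have hconc : ConcaveOn ℝ {x | ∀ v ∈ K, 0 ≤ ⟪x, v⟫} d := by
    have := concaveOn_of_isMinOn_family (concaveOn_lagrangian hLag) convex_univ huu
    exact (funext hd ▸ this).subset (subset_univ _) (convex_setOf_forall_inner_nonneg K)
  have hweak : d xdelta ≤ d xstar := by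
    rw [hdxstar, hfstar, hd]
    exact ((huu xdelta).2 ustar hustar.1).trans (lagrangian_le_of_mem_dual hLag hxdK hustar.2.1)
  have hmax : IsMaxOn (fun z ↦ d z - δ / 2 * ‖z - x0‖ ^ 2) _ xdelta :=
    isMaxOn_iff.2 fun z hz ↦ by simpa only [hddelta] using hxdmax z hz
  have hpyth := sq_norm_sub_add_sq_norm_sub_le_of_isMaxOn hconc hδ hxdK hmax hxstarK hweak
  have hnear : ‖xstar - xdelta‖ ≤ ‖xstar - x0‖ :=
    (pow_le_pow_iff_left₀ (norm_nonneg _) (norm_nonneg _) two_ne_zero).1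
      (by linarith [sq_nonneg ‖xdelta - x0‖])
  refine ⟨hnear, ?_⟩
  calc ‖x0 - xdelta‖ ≤ ‖x0 - xstar‖ + ‖xstar - xdelta‖ := norm_sub_le_norm_sub_add_norm_sub _ _ _
    _ ≤ Rd + Rd := by rw [hRd, norm_sub_rev x0 xstar]; gcongr
    _ = 2 * Rd := (two_mul Rd).symm

theorem stmt_12 {n p : ℕ}
    (f : EuclideanSpace ℝ (Fin n) → ℝ) (σf : ℝ) (hσf : 0 < σf)
    (hfc : Continuous f) (hfsc : StrongConvexOn Set.univ σf f)
    (U : Set (EuclideanSpace ℝ (Fin n))) (hUne : U.Nonempty) (hUcl : IsClosed U) (hUcv : Convex ℝ U)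
    (G : EuclideanSpace ℝ (Fin n) →L[ℝ] EuclideanSpace ℝ (Fin p)) (hG : G ≠ 0) (g : EuclideanSpace ℝ (Fin p))
    (K : Set (EuclideanSpace ℝ (Fin p))) (hKne : K.Nonempty) (hKcl : IsClosed K) (hKcv : Convex ℝ K)
    (hKcone : ∀ c : ℝ, 0 ≤ c → ∀ v ∈ K, c • v ∈ K)
    (Kstar : Set (EuclideanSpace ℝ (Fin p)))
    (hKstar : Kstar = {x : EuclideanSpace ℝ (Fin p) | ∀ v ∈ K, 0 ≤ ⟪x, v⟫})
    (Lag : EuclideanSpace ℝ (Fin n) → EuclideanSpace ℝ (Fin p) → ℝ)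
    (hLag : ∀ u x, Lag u x = f u + ⟪x, -(G u) - g⟫)
    (uu : EuclideanSpace ℝ (Fin p) → EuclideanSpace ℝ (Fin n))
    (huu : ∀ x : EuclideanSpace ℝ (Fin p), uu x ∈ U ∧ ∀ u ∈ U, Lag (uu x) x ≤ Lag u x)
    (d : EuclideanSpace ℝ (Fin p) → ℝ) (hd : ∀ x, d x = Lag (uu x) x)
    (ustar : EuclideanSpace ℝ (Fin n))
    (hustar : ustar ∈ U ∧ G ustar + g ∈ K ∧ ∀ u ∈ U, G u + g ∈ K → f ustar ≤ f u)
    (fstar : ℝ) (hfstar : fstar = f ustar)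
    (Xstar : Set (EuclideanSpace ℝ (Fin p))) (hXstar : Xstar = {x ∈ Kstar | d x = fstar})
    (hXne : Xstar.Nonempty)
    (x0 : EuclideanSpace ℝ (Fin p)) (hx0K : x0 ∈ Kstar)
    (xstar : EuclideanSpace ℝ (Fin p)) (hxstar : xstar ∈ Xstar)
    (hxstarmin : ∀ z ∈ Xstar, ‖x0 - xstar‖ ≤ ‖x0 - z‖)
    (Rd : ℝ) (hRd : Rd = ‖x0 - xstar‖)
    (δ : ℝ) (hδ : 0 < δ)
    (ddelta : EuclideanSpace ℝ (Fin p) → ℝ)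
    (hddelta : ∀ z, ddelta z = d z - δ / 2 * ‖z - x0‖ ^ 2)
    (xdelta : EuclideanSpace ℝ (Fin p)) (hxdK : xdelta ∈ Kstar)
    (hxdmax : ∀ z ∈ Kstar, ddelta z ≤ ddelta xdelta) :
    ‖xstar - xdelta‖ ≤ ‖xstar - x0‖ ∧ ‖x0 - xdelta‖ ≤ 2 * Rd :=
  stmt_12_general f U G g K Kstar hKstar Lag hLag uu huu d hd ustar hustar fstar hfstar Xstar hXstar
    x0 xstar hxstar Rd hRd δ hδ ddelta hddelta xdelta hxdK hxdmax
end
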